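/- Invertibility: if all γ_j ≠ 0 and δ_j > 0, the MCLLO recalibration map on the open probability simplex is a bijection, with inverse given by the MCLLO map with parameters δ*_j = δ_j^{-1/γ_j} and γ*_j = 1/γ_j. -/

import Mathlib

/-!
Write `o_j(x) = δ_j (x_j / x_c) ^ γ_j` for the odds that `mcllo` assigns to category `j` against
the baseline `c`; then `mcllo x = (o, 1) / (1 + ∑ o)` is a positive probability vector with
odds `o(x)`. A positive probability vector is determined by its odds against the baseline, and
the power law `r ↦ δ r ^ γ` is inverted by `s ↦ δ ^ (-1/γ) s ^ (1/γ)`, so the map with the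
inverted parameters undoes `mcllo`. Inverting the parameters twice gives them back.
-/

open Real Finset

/-- The MCLLO recalibration map in closed form: categories are `Fin (n+1)` with
baseline `Fin.last n`, shift parameters `δ` and scale parameters `γ`. -/
noncomputable def mcllo (n : ℕ) (δ γ : Fin n → ℝ) (x : Fin (n + 1) → ℝ) :
    Fin (n + 1) → ℝ := fun i =>
  if h : i = Fin.last n then
    1 / (1 + ∑ m, δ m * x m.castSucc ^ γ m * x (Fin.last n) ^ (-(γ m)))
  else
    δ (i.castPred h) * x i ^ γ (i.castPred h) * x (Fin.last n) ^ (-(γ (i.castPred h))) /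
      (1 + ∑ m, δ m * x m.castSucc ^ γ m * x (Fin.last n) ^ (-(γ m)))

theorem eq_of_sum_eq_one_of_div_eq_div {ι : Type*} [Fintype ι] {g x : ι → ℝ} (c : ι)
    (hg : g c ≠ 0) (hgs : ∑ i, g i = 1) (hxs : ∑ i, x i = 1)
    (h : ∀ i, g i / g c = x i / x c) : g = x := by
  have hscale : ∀ i, g i = g c / x c * x i := fun i => by
    rw [div_mul_comm, ← h i, div_mul_cancel₀ _ hg]
  have hone : g c / x c = 1 := by
    rw [← hgs, ← mul_one (g c / x c), ← hxs, mul_sum]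
    exact (sum_congr rfl fun i _ => hscale i).symm
  funext i
  rw [hscale i, hone, one_mul]

theorem rpow_neg_one_div_mul_mul_rpow_one_div {δ r γ : ℝ} (hδ : 0 < δ) (hr : 0 ≤ r)
    (hγ : γ ≠ 0) : δ ^ (-(1 / γ)) * (δ * r ^ γ) ^ (1 / γ) = r := by
  rw [mul_rpow hδ.le (rpow_nonneg hr γ), ← rpow_mul hr, mul_one_div_cancel hγ, rpow_one,
    ← mul_assoc, ← rpow_add hδ, neg_add_cancel, rpow_zero, one_mul]

namespace Mcllo

variable {n : ℕ} {δ γ : Fin n → ℝ} {x : Fin (n + 1) → ℝ}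

noncomputable def odds (δ γ : Fin n → ℝ) (x : Fin (n + 1) → ℝ) (j : Fin n) : ℝ :=
  δ j * x j.castSucc ^ γ j * x (Fin.last n) ^ (-(γ j))

noncomputable def invShift (δ γ : Fin n → ℝ) (j : Fin n) : ℝ := δ j ^ (-(1 / γ j))

noncomputable def invScale (γ : Fin n → ℝ) (j : Fin n) : ℝ := 1 / γ j

theorem odds_eq_mul_div_rpow (hx : ∀ i, 0 < x i) (j : Fin n) :
    odds δ γ x j = δ j * (x j.castSucc / x (Fin.last n)) ^ γ j := by
  rw [odds, mul_assoc, div_rpow (hx _).le (hx _).le, rpow_neg (hx _).le, div_eq_mul_inv]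

theorem odds_pos (hδ : ∀ j, 0 < δ j) (hx : ∀ i, 0 < x i) (j : Fin n) :
    0 < odds δ γ x j := by
  rw [odds_eq_mul_div_rpow hx]
  exact mul_pos (hδ j) (rpow_pos_of_pos (div_pos (hx _) (hx _)) _)

theorem one_add_sum_odds_pos (hδ : ∀ j, 0 < δ j) (hx : ∀ i, 0 < x i) :
    0 < 1 + ∑ m, odds δ γ x m :=
  add_pos_of_pos_of_nonneg one_pos (sum_nonneg fun m _ => (odds_pos hδ hx m).le)

theorem mcllo_last : mcllo n δ γ x (Fin.last n) = 1 / (1 + ∑ m, odds δ γ x m) := by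
  simp [mcllo, odds]

theorem mcllo_castSucc (j : Fin n) :
    mcllo n δ γ x j.castSucc = odds δ γ x j / (1 + ∑ m, odds δ γ x m) := by
  simp [mcllo, odds, (Fin.castSucc_lt_last j).ne]

theorem mcllo_pos (hδ : ∀ j, 0 < δ j) (hx : ∀ i, 0 < x i) (i : Fin (n + 1)) :
    0 < mcllo n δ γ x i := by
  have hS := one_add_sum_odds_pos (γ := γ) hδ hx
  induction i using Fin.lastCases with
  | last => rw [mcllo_last]; positivity
  | cast j => rw [mcllo_castSucc]; exact div_pos (odds_pos hδ hx j) hS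

theorem sum_mcllo (hδ : ∀ j, 0 < δ j) (hx : ∀ i, 0 < x i) : ∑ i, mcllo n δ γ x i = 1 := by
  rw [Fin.sum_univ_castSucc]
  simp only [mcllo_castSucc, mcllo_last]
  rw [← sum_div, ← add_div, add_comm, div_self (one_add_sum_odds_pos hδ hx).ne']

theorem mcllo_castSucc_div_last (hδ : ∀ j, 0 < δ j) (hx : ∀ i, 0 < x i) (j : Fin n) :
    mcllo n δ γ x j.castSucc / mcllo n δ γ x (Fin.last n) = odds δ γ x j := by
  rw [mcllo_castSucc, mcllo_last, div_div_div_cancel_right₀ (one_add_sum_odds_pos hδ hx).ne',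
    div_one]

theorem invShift_pos (hδ : ∀ j, 0 < δ j) (j : Fin n) : 0 < invShift δ γ j :=
  rpow_pos_of_pos (hδ j) _

theorem invScale_ne_zero (hγ : ∀ j, γ j ≠ 0) (j : Fin n) : invScale γ j ≠ 0 :=
  one_div_ne_zero (hγ j)

theorem invShift_invShift (hδ : ∀ j, 0 < δ j) (hγ : ∀ j, γ j ≠ 0) :
    invShift (invShift δ γ) (invScale γ) = δ := by
  funext j
  rw [invShift, invShift, invScale, one_div_one_div, ← rpow_mul (hδ j).le, neg_mul_neg,
    one_div_mul_cancel (hγ j), rpow_one]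

theorem invScale_invScale : invScale (invScale γ) = γ := by
  funext j
  exact one_div_one_div (γ j)

theorem odds_inv_mcllo (hδ : ∀ j, 0 < δ j) (hγ : ∀ j, γ j ≠ 0) (hx : ∀ i, 0 < x i)
    (j : Fin n) :
    odds (invShift δ γ) (invScale γ) (mcllo n δ γ x) j = x j.castSucc / x (Fin.last n) := by
  rw [odds_eq_mul_div_rpow (mcllo_pos hδ hx), mcllo_castSucc_div_last hδ hx,
    odds_eq_mul_div_rpow hx, invShift, invScale]
  exact rpow_neg_one_div_mul_mul_rpow_one_div (hδ j) (div_pos (hx _) (hx _)).le (hγ j)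

theorem mcllo_inv_mcllo (hδ : ∀ j, 0 < δ j) (hγ : ∀ j, γ j ≠ 0) (hx : ∀ i, 0 < x i)
    (hxs : ∑ i, x i = 1) : mcllo n (invShift δ γ) (invScale γ) (mcllo n δ γ x) = x := by
  have hg := mcllo_pos (γ := γ) hδ hx
  refine eq_of_sum_eq_one_of_div_eq_div (Fin.last n) (mcllo_pos (invShift_pos hδ) hg _).ne'
    (sum_mcllo (invShift_pos hδ) hg) hxs fun i => ?_
  induction i using Fin.lastCases with
  | last => rw [div_self (mcllo_pos (invShift_pos hδ) hg _).ne', div_self (hx _).ne']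
  | cast j =>
    rw [mcllo_castSucc_div_last (invShift_pos hδ) hg, odds_inv_mcllo hδ hγ hx]

end Mcllo

open Mcllo in
theorem mcllo_bijective_on_simplex_general (n : ℕ)
    (δ γ : Fin n → ℝ) (hδ : ∀ j, 0 < δ j) (hγ : ∀ j, γ j ≠ 0) :
    (∀ x : Fin (n + 1) → ℝ, (∀ i, 0 < x i) → ∑ i, x i = 1 →
        ((∀ i, 0 < mcllo n δ γ x i) ∧ ∑ i, mcllo n δ γ x i = 1)) ∧
    (∀ x : Fin (n + 1) → ℝ, (∀ i, 0 < x i) → ∑ i, x i = 1 →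
        mcllo n (fun j => δ j ^ (-(1 / γ j))) (fun j => 1 / γ j) (mcllo n δ γ x) = x) ∧
    (∀ x : Fin (n + 1) → ℝ, (∀ i, 0 < x i) → ∑ i, x i = 1 →
        mcllo n δ γ (mcllo n (fun j => δ j ^ (-(1 / γ j))) (fun j => 1 / γ j) x) = x) := by
  refine ⟨fun x hx _ => ⟨mcllo_pos hδ hx, sum_mcllo hδ hx⟩,
    fun x hx hxs => mcllo_inv_mcllo hδ hγ hx hxs, fun x hx hxs => ?_⟩
  have h := mcllo_inv_mcllo (invShift_pos (γ := γ) hδ) (invScale_ne_zero hγ) hx hxs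
  rwa [invShift_invShift hδ hγ, invScale_invScale] at h

/-- For `δ_j > 0` and `γ_j ≠ 0`, the MCLLO map is a bijection of the
open probability simplex, with inverse the MCLLO map with parameters
`δ*_j = δ_j ^ (-1/γ_j)` and `γ*_j = 1/γ_j`. -/
theorem mcllo_bijective_on_simplex (n : ℕ) (hn : 1 ≤ n)
    (δ γ : Fin n → ℝ) (hδ : ∀ j, 0 < δ j) (hγ : ∀ j, γ j ≠ 0) :
    (∀ x : Fin (n + 1) → ℝ, (∀ i, 0 < x i) → ∑ i, x i = 1 →
        ((∀ i, 0 < mcllo n δ γ x i) ∧ ∑ i, mcllo n δ γ x i = 1)) ∧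
    (∀ x : Fin (n + 1) → ℝ, (∀ i, 0 < x i) → ∑ i, x i = 1 →
        mcllo n (fun j => δ j ^ (-(1 / γ j))) (fun j => 1 / γ j) (mcllo n δ γ x) = x) ∧
    (∀ x : Fin (n + 1) → ℝ, (∀ i, 0 < x i) → ∑ i, x i = 1 →
        mcllo n δ γ (mcllo n (fun j => δ j ^ (-(1 / γ j))) (fun j => 1 / γ j) x) = x) :=
  mcllo_bijective_on_simplex_general n δ γ hδ hγ
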